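/- Let C ∈ M_{n-1}, V = k·p_n in degree n, and γ, θ graded 2-cocycles of p(C) with values in V. The central extensions p(C)_θ and p(C)_γ (with products extending p(C) by p_i p_j = θ(p_i,p_j), resp. γ(p_i,p_j), when i+j=n) are isomorphic as graded algebras if and only if there exist a graded algebra automorphism σ of p(C) and a nonzero scalar b such that θ∘(σ×σ) = b·γ. -/

import Mathlib

/-- Bilinear multiplication determined by the coefficient matrix `c`:
`p_i p_j = c i j • p_{i+j}`. -/
def dmul {K : Type*} [Field K] (c : ℕ → ℕ → K) (x y : ℕ → K) : ℕ → K :=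
  fun m => ∑ i ∈ Finset.range (m + 1), c i (m - i) * x i * y (m - i)

/-- The bilinear form (coefficient of `p_n`) associated with a 2-cocycle tuple `t`. -/
def Bform {K : Type*} [Field K] (n : ℕ) (t : ℕ → K) (x y : ℕ → K) : K :=
  ∑ i ∈ Finset.Ico 1 n, t i * x i * y (n - i)

/-- The `n × n` coefficient matrix of the central extension `p(C)_θ`: it extends `C`
by the entries `θ_i` at the positions `(i, n-i)`. -/
def Dmat {K : Type*} [Field K] (n : ℕ) (c : ℕ → ℕ → K) (t : ℕ → K) : ℕ → ℕ → K :=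
  fun i j => if i + j = n ∧ 1 ≤ i ∧ 1 ≤ j then t i else c i j

/-!
A graded isomorphism is diagonal in the bases `p_i`, and a diagonal map with weights `f` is
multiplicative from the structure constants `A` to `B` exactly when
`A i j * f (i + j) = B i j * (f i * f j)`. For the extension matrices this splits into the same
condition for `C` (which never involves the top weight `f n`, as `C` has no products of degree
`≥ n`) and `θ_i f_n = γ_i f_i f_{n-i}`. The first says that the inverse weights give an
automorphism `σ` of `p(C)`, the second that `θ ∘ (σ × σ) = f_n⁻¹ • γ`. Conversely, from the
weights `e` of `σ` one takes the weights `e⁻¹`, with the top one replaced by `b⁻¹`.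
-/

open Function

section Diagonal

variable {K : Type*} [Field K]

lemma dmul_single (D : ℕ → ℕ → K) (i j : ℕ) (u v : K) :
    dmul D (Pi.single i u) (Pi.single j v) = Pi.single (i + j) (D i j * u * v) := by
  funext m
  by_cases hm : m = i + j
  · subst hm
    rw [dmul, Finset.sum_eq_single_of_mem i (by simp)]
    · simp
    · intro a _ ha
      simp [Pi.single_eq_of_ne ha]
  · rw [Pi.single_eq_of_ne hm]
    refine Finset.sum_eq_zero fun a ha' => ?_
    rcases eq_or_ne a i with rfl | ha
    · have : m - a ≠ j := by have := Finset.mem_range.mp ha'; omega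
      simp [Pi.single_eq_of_ne this]
    · simp [Pi.single_eq_of_ne ha]

lemma Bform_single {n i : ℕ} (t : ℕ → K) (hi : 1 ≤ i) (hin : i < n) (u v : K) :
    Bform n t (Pi.single i u) (Pi.single (n - i) v) = t i * u * v := by
  rw [Bform, Finset.sum_eq_single_of_mem i (Finset.mem_Ico.mpr ⟨hi, hin⟩)]
  · simp
  · intro a _ ha
    simp [Pi.single_eq_of_ne ha]

lemma exists_weights_of_map_single (φ : (ℕ → K) ≃ₗ[K] (ℕ → K))
    (hφ : ∀ i, ∃ d : K, φ (Pi.single i 1) = Pi.single i d) :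
    ∃ d : ℕ → K, (∀ i, d i ≠ 0) ∧ ∀ i, φ (Pi.single i 1) = Pi.single i (d i) := by
  choose d hd using hφ
  refine ⟨d, fun i hi => ?_, hd⟩
  have : φ (Pi.single i 1) = φ 0 := by rw [hd, hi, Pi.single_zero, map_zero]
  simpa using congrFun (φ.injective this) i

def diagE (f : ℕ → K) (hf : ∀ i, f i ≠ 0) : (ℕ → K) ≃ₗ[K] (ℕ → K) :=
  LinearEquiv.piCongrRight fun i => LinearEquiv.smulOfNeZero K K (f i) (hf i)

lemma diagE_apply (f : ℕ → K) (hf : ∀ i, f i ≠ 0) (x : ℕ → K) (m : ℕ) :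
    diagE f hf x m = f m * x m := rfl

lemma diagE_single (f : ℕ → K) (hf : ∀ i, f i ≠ 0) (i : ℕ) :
    diagE f hf (Pi.single i 1) = Pi.single i (f i) := by
  funext m
  rcases eq_or_ne m i with rfl | h
  · simp [diagE_apply]
  · simp [diagE_apply, Pi.single_eq_of_ne h]

def IsDiagHom (A B : ℕ → ℕ → K) (f : ℕ → K) : Prop :=
  ∀ i j, A i j * f (i + j) = B i j * (f i * f j)

lemma isDiagHom_of_map_dmul {A B : ℕ → ℕ → K} {d : ℕ → K} (φ : (ℕ → K) ≃ₗ[K] (ℕ → K))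
    (hd : ∀ i, φ (Pi.single i 1) = Pi.single i (d i))
    (hφ : ∀ x y, φ (dmul A x y) = dmul B (φ x) (φ y)) : IsDiagHom A B d := by
  intro i j
  have h := hφ (Pi.single i 1) (Pi.single j 1)
  rw [hd, hd, dmul_single, dmul_single, mul_one, mul_one, ← mul_one (A i j), ← smul_eq_mul,
    Pi.single_smul', map_smul, hd, ← Pi.single_smul'] at h
  simpa [mul_assoc] using congrFun h (i + j)

lemma diagE_map_dmul {A B : ℕ → ℕ → K} {f : ℕ → K} (hf : ∀ i, f i ≠ 0) (h : IsDiagHom A B f)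
    (x y : ℕ → K) : diagE f hf (dmul A x y) = dmul B (diagE f hf x) (diagE f hf y) := by
  funext m
  simp only [diagE_apply, dmul, Finset.mul_sum]
  refine Finset.sum_congr rfl fun a ha => ?_
  have hk := h a (m - a)
  rw [Nat.add_sub_cancel' (Nat.le_of_lt_succ (Finset.mem_range.mp ha))] at hk
  linear_combination x a * y (m - a) * hk

lemma IsDiagHom.inv {A : ℕ → ℕ → K} {f : ℕ → K} (h : IsDiagHom A A f) :
    IsDiagHom A A f⁻¹ := by
  intro i j
  rcases eq_or_ne (A i j) 0 with hA | hA
  · simp [hA]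
  · have hij := mul_left_cancel₀ hA (h i j)
    simp [hij, mul_comm]

end Diagonal

section Extension

variable {K : Type*} [Field K] {n : ℕ} {c : ℕ → ℕ → K}

lemma Dmat_of_add_eq (t : ℕ → K) {i j : ℕ} (hij : i + j = n) (hi : 1 ≤ i) (hj : 1 ≤ j) :
    Dmat n c t i j = t i :=
  if_pos ⟨hij, hi, hj⟩

lemma IsDiagHom.update (hzero : ∀ i j, i = 0 ∨ j = 0 ∨ n - 1 < i + j → c i j = 0)
    {f : ℕ → K} (h : IsDiagHom c c f) (s : K) : IsDiagHom c c (update f n s) := by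
  intro i j
  rcases eq_or_ne (c i j) 0 with hc | hc
  · simp [hc]
  · have : i ≠ 0 ∧ j ≠ 0 ∧ i + j ≤ n - 1 := by
      refine ⟨?_, ?_, ?_⟩ <;> by_contra h' <;> exact hc (hzero i j (by omega))
    rw [update_of_ne (by omega), update_of_ne (by omega), update_of_ne (by omega)]
    exact h i j

theorem isDiagHom_Dmat_iff (hzero : ∀ i j, i = 0 ∨ j = 0 ∨ n - 1 < i + j → c i j = 0)
    (tθ tγ f : ℕ → K) :
    IsDiagHom (Dmat n c tθ) (Dmat n c tγ) f ↔
      IsDiagHom c c f ∧ ∀ i, 1 ≤ i → i < n → tθ i * f n = tγ i * (f i * f (n - i)) := by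
  constructor
  · intro h
    refine ⟨fun i j => ?_, fun i hi hin => ?_⟩
    · by_cases hij : i + j = n ∧ 1 ≤ i ∧ 1 ≤ j
      · rw [hzero i j (by omega)]; ring
      · simpa only [Dmat, if_neg hij] using h i j
    · simpa only [Dmat_of_add_eq _ (Nat.add_sub_cancel' hin.le) hi (by omega),
        Nat.add_sub_cancel' hin.le] using h i (n - i)
  · rintro ⟨hc, ht⟩ i j
    by_cases hij : i + j = n ∧ 1 ≤ i ∧ 1 ≤ j
    · obtain ⟨rfl, hi, hj⟩ := hij
      rw [Dmat_of_add_eq _ rfl hi hj, Dmat_of_add_eq _ rfl hi hj]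
      simpa only [Nat.add_sub_cancel_left] using ht i hi (by omega)
    · simpa only [Dmat, if_neg hij] using hc i j

lemma Bform_diagE_eq_mul {tθ tγ f : ℕ → K} (hf : ∀ i, f i ≠ 0) {b : K}
    (h : ∀ i, 1 ≤ i → i < n → tθ i * f i * f (n - i) = b * tγ i) (x y : ℕ → K) :
    Bform n tθ (diagE f hf x) (diagE f hf y) = b * Bform n tγ x y := by
  simp only [Bform, diagE_apply, Finset.mul_sum]
  refine Finset.sum_congr rfl fun i hi => ?_
  obtain ⟨hi1, hin⟩ := Finset.mem_Ico.mp hi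
  linear_combination x i * y (n - i) * h i hi1 hin

end Extension

theorem stmt_7_general {K : Type*} [Field K] (n : ℕ) (c : ℕ → ℕ → K)
    (hzero : ∀ i j, i = 0 ∨ j = 0 ∨ n - 1 < i + j → c i j = 0)
    (tθ tγ : ℕ → K) :
    -- the central extensions `p(C)_θ` and `p(C)_γ` are isomorphic as graded algebras
    (∃ φ : (ℕ → K) ≃ₗ[K] (ℕ → K),
        (∀ i : ℕ, ∃ d : K, φ (Pi.single i 1) = Pi.single i d) ∧
        ∀ x y, φ (dmul (Dmat n c tθ) x y) = dmul (Dmat n c tγ) (φ x) (φ y)) ↔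
    -- iff some graded algebra automorphism σ of `p(C)` and b ≠ 0 give θ∘(σ×σ) = b·γ
    (∃ σ : (ℕ → K) ≃ₗ[K] (ℕ → K),
        (∀ i : ℕ, ∃ d : K, σ (Pi.single i 1) = Pi.single i d) ∧
        (∀ x y, σ (dmul c x y) = dmul c (σ x) (σ y)) ∧
        ∃ b : K, b ≠ 0 ∧ ∀ x y, Bform n tθ (σ x) (σ y) = b * Bform n tγ x y) := by
  constructor
  · rintro ⟨φ, hφ, hφmul⟩
    obtain ⟨d, hd0, hd⟩ := exists_weights_of_map_single φ hφ
    obtain ⟨hc, ht⟩ := (isDiagHom_Dmat_iff hzero tθ tγ d).1 (isDiagHom_of_map_dmul φ hd hφmul)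
    have hdinv : ∀ i, d⁻¹ i ≠ 0 := fun i => inv_ne_zero (hd0 i)
    refine ⟨diagE d⁻¹ hdinv, fun i => ⟨_, diagE_single _ hdinv i⟩, diagE_map_dmul hdinv hc.inv,
      (d n)⁻¹, inv_ne_zero (hd0 n), Bform_diagE_eq_mul hdinv fun i hi hin => ?_⟩
    have := hd0 i; have := hd0 (n - i); have := hd0 n
    simp only [Pi.inv_apply]
    field_simp
    linear_combination ht i hi hin
  · rintro ⟨σ, hσ, hσmul, b, hb, hB⟩
    obtain ⟨e, he0, he⟩ := exists_weights_of_map_single σ hσ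
    have ht : ∀ i, 1 ≤ i → i < n → tθ i * (e i * e (n - i)) = b * tγ i := fun i hi hin => by
      simpa [he, Bform_single _ hi hin, mul_assoc] using hB (Pi.single i 1) (Pi.single (n - i) 1)
    set f := update e⁻¹ n b⁻¹
    have hf : ∀ i, f i ≠ 0 := fun i => by
      rcases eq_or_ne i n with rfl | hi
      · simpa [f] using hb
      · simpa [f, hi] using he0 i
    have hDmat : IsDiagHom (Dmat n c tθ) (Dmat n c tγ) f := by
      refine (isDiagHom_Dmat_iff hzero tθ tγ f).2
        ⟨((isDiagHom_of_map_dmul σ he hσmul).inv).update hzero _, fun i hi hin => ?_⟩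
      have := he0 i; have := he0 (n - i)
      simp only [f, update_self, update_of_ne (show i ≠ n by omega),
        update_of_ne (show n - i ≠ n by omega), Pi.inv_apply]
      field_simp
      linear_combination ht i hi hin
    exact ⟨diagE f hf, fun i => ⟨_, diagE_single f hf i⟩, diagE_map_dmul hf hDmat⟩

theorem stmt_7 {K : Type*} [Field K] (n : ℕ) (hn : 2 ≤ n) (c : ℕ → ℕ → K)
    (hsym : ∀ i j, c i j = c j i)
    (hassoc : ∀ i j l, 1 ≤ i → 1 ≤ j → 1 ≤ l →
      c j l * c i (j + l) = c i j * c (i + j) l)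
    (hzero : ∀ i j, i = 0 ∨ j = 0 ∨ n - 1 < i + j → c i j = 0)
    (tθ tγ : ℕ → K)
    (hθsym : ∀ i, 1 ≤ i → i ≤ n - 1 → tθ i = tθ (n - i))
    (hθinv : ∀ i j l, 1 ≤ i → 1 ≤ j → 1 ≤ l → i + j + l = n →
      tθ (i + j) * c i j = tθ (j + l) * c j l)
    (hγsym : ∀ i, 1 ≤ i → i ≤ n - 1 → tγ i = tγ (n - i))
    (hγinv : ∀ i j l, 1 ≤ i → 1 ≤ j → 1 ≤ l → i + j + l = n →
      tγ (i + j) * c i j = tγ (j + l) * c j l) :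
    -- the central extensions `p(C)_θ` and `p(C)_γ` are isomorphic as graded algebras
    (∃ φ : (ℕ → K) ≃ₗ[K] (ℕ → K),
        (∀ i : ℕ, ∃ d : K, φ (Pi.single i 1) = Pi.single i d) ∧
        ∀ x y, φ (dmul (Dmat n c tθ) x y) = dmul (Dmat n c tγ) (φ x) (φ y)) ↔
    -- iff some graded algebra automorphism σ of `p(C)` and b ≠ 0 give θ∘(σ×σ) = b·γ
    (∃ σ : (ℕ → K) ≃ₗ[K] (ℕ → K),
        (∀ i : ℕ, ∃ d : K, σ (Pi.single i 1) = Pi.single i d) ∧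
        (∀ x y, σ (dmul c x y) = dmul c (σ x) (σ y)) ∧
        ∃ b : K, b ≠ 0 ∧ ∀ x y, Bform n tθ (σ x) (σ y) = b * Bform n tγ x y) :=
  stmt_7_general n c hzero tθ tγ
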